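/- arXiv:2001.05228 — 4 statements merged into one kernel-verified Lean document; each statement's English description precedes it below -/
import Mathlib

section
/- For any true and predicted relevance vectors y, ŷ ∈ [0,∞)^L and any k with 2k ≤ L, the ranking regret at k is nonnegative and bounded above by twice the extreme mean absolute deviation at 2k: 0 ≤ WP-regret@k(ŷ, y) ≤ 2·XMAD@2k(ŷ, y). -/
/-- `A` is an index set of the `k` largest entries of `v`: it has cardinality `k`
and every entry inside is at least every entry outside. -/
def IsTopSet {L : ℕ} (v : Fin L → ℝ) (k : ℕ) (A : Finset (Fin L)) : Prop :=
  A.card = k ∧ ∀ i ∈ A, ∀ j ∉ A, v j ≤ v i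

private lemma sum_le_sum_pair {α : Type*} [DecidableEq α] (s t : Finset α) (f g : α → ℝ)
    (h : s.card = t.card) (hle : ∀ i ∈ s, ∀ j ∈ t, f i ≤ g j) :
    ∑ i ∈ s, f i ≤ ∑ j ∈ t, g j := by
  classical
  let e := Finset.equivOfCardEq h
  have h1 : ∑ i ∈ s, f i = ∑ x : {x // x ∈ s}, f x := (Finset.sum_coe_sort s f).symm
  have h2 : ∑ j ∈ t, g j = ∑ x : {x // x ∈ t}, g x := (Finset.sum_coe_sort t g).symm
  rw [h1, h2]
  have h3 : ∑ x : {x // x ∈ t}, g x = ∑ x : {x // x ∈ s}, g (e x) :=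
    (Fintype.sum_equiv e _ _ (fun x => rfl)).symm
  rw [h3]
  exact Finset.sum_le_sum (fun x _ => hle x x.2 (e x) (e x).2)

/-- A top set dominates sums of any set of cardinality at most its own, for
a nonnegative vector. -/
private lemma sum_le_topSet {L : ℕ} (v : Fin L → ℝ) (hv : ∀ l, 0 ≤ v l) (m : ℕ)
    (E S : Finset (Fin L)) (hE : IsTopSet v m E) (hS : S.card ≤ m) :
    ∑ l ∈ S, v l ≤ ∑ l ∈ E, v l := by
  classical
  have hcard : (S \ E).card ≤ (E \ S).card := by
    have h1 := Finset.card_sdiff_add_card_inter S E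
    have h2 := Finset.card_sdiff_add_card_inter E S
    have h3 := hE.1
    rw [Finset.inter_comm] at h2
    omega
  obtain ⟨T, hTsub, hTcard⟩ := Finset.exists_subset_card_eq hcard
  have h1 : ∑ l ∈ S \ E, v l ≤ ∑ l ∈ T, v l :=
    sum_le_sum_pair _ _ v v hTcard.symm
      (fun i hi j hj => hE.2 j (Finset.mem_sdiff.mp (hTsub hj)).1 i (Finset.mem_sdiff.mp hi).2)
  have h2 : ∑ l ∈ T, v l ≤ ∑ l ∈ E \ S, v l :=
    Finset.sum_le_sum_of_subset_of_nonneg hTsub (fun i _ _ => hv i)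
  have hs : ∑ l ∈ S, v l = ∑ l ∈ S ∩ E, v l + ∑ l ∈ S \ E, v l :=
    (Finset.sum_inter_add_sum_sdiff S E v).symm
  have he : ∑ l ∈ E, v l = ∑ l ∈ S ∩ E, v l + ∑ l ∈ E \ S, v l := by
    rw [Finset.inter_comm]
    exact (Finset.sum_inter_add_sum_sdiff E S v).symm
  linarith

/-- `0 ≤ WP-regret@k(ŷ, y) ≤ 2·XMAD@2k(ŷ, y)` for `2k ≤ L`. -/
theorem wp_regret_nonneg_and_le_two_xmad
    (L k : ℕ) (hk : 0 < k) (hkL : 2 * k ≤ L)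
    (y yhat : Fin L → ℝ) (hy : ∀ l, 0 ≤ y l) (hyhat : ∀ l, 0 ≤ yhat l)
    (A B E : Finset (Fin L))
    (hA : IsTopSet y k A) (hB : IsTopSet yhat k B)
    (hE : IsTopSet (fun l => |yhat l - y l|) (2 * k) E) :
    0 ≤ (1 / (k : ℝ)) * (∑ l ∈ A, y l) - (1 / (k : ℝ)) * (∑ l ∈ B, y l) ∧
      (1 / (k : ℝ)) * (∑ l ∈ A, y l) - (1 / (k : ℝ)) * (∑ l ∈ B, y l) ≤
        2 * ((1 / ((2 * k : ℕ) : ℝ)) * ∑ l ∈ E, |yhat l - y l|) := by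
  classical
  set e : Fin L → ℝ := fun l => |yhat l - y l| with he_def
  have hkR : (0 : ℝ) < (k : ℝ) := by exact_mod_cast hk
  have hcardsd : (B \ A).card = (A \ B).card := by
    have h1 := Finset.card_sdiff_add_card_inter B A
    have h2 := Finset.card_sdiff_add_card_inter A B
    have h3 := hA.1
    have h4 := hB.1
    rw [Finset.inter_comm] at h2
    omega
  -- decompositions
  have hsA : ∀ f : Fin L → ℝ, ∑ l ∈ A, f l = ∑ l ∈ A ∩ B, f l + ∑ l ∈ A \ B, f l :=
    fun f => (Finset.sum_inter_add_sum_sdiff A B f).symm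
  have hsB : ∀ f : Fin L → ℝ, ∑ l ∈ B, f l = ∑ l ∈ A ∩ B, f l + ∑ l ∈ B \ A, f l := by
    intro f
    rw [Finset.inter_comm]
    exact (Finset.sum_inter_add_sum_sdiff B A f).symm
  -- Part 1: ∑_B y ≤ ∑_A y
  have hBA : ∑ l ∈ B, y l ≤ ∑ l ∈ A, y l := by
    have := sum_le_sum_pair (B \ A) (A \ B) y y hcardsd
      (fun i hi j hj => hA.2 j (Finset.mem_sdiff.mp hj).1 i (Finset.mem_sdiff.mp hi).2)
    rw [hsA y, hsB y]; linarith
  constructor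
  · have := mul_le_mul_of_nonneg_left hBA (le_of_lt (one_div_pos.mpr hkR))
    linarith
  -- Part 2
  have hkey : ∑ l ∈ A \ B, (y l - e l) ≤ ∑ l ∈ B \ A, (y l + e l) := by
    refine sum_le_sum_pair _ _ _ _ hcardsd.symm ?_
    intro i hi j hj
    have hiA := Finset.mem_sdiff.mp hi
    have hjB := Finset.mem_sdiff.mp hj
    have hhat : yhat i ≤ yhat j := hB.2 j hjB.1 i hiA.2
    have h1 : y i - yhat i ≤ e i := by
      have h := neg_abs_le (yhat i - y i)
      simp only [he_def]
      linarith
    have h2 : yhat j - y j ≤ e j := le_abs_self _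
    linarith
  have hsplit : ∑ l ∈ A, y l - ∑ l ∈ B, y l ≤
      ∑ l ∈ (A \ B) ∪ (B \ A), e l := by
    have hdisj : Disjoint (A \ B) (B \ A) := disjoint_sdiff_sdiff
    rw [Finset.sum_union hdisj, hsA y, hsB y]
    rw [Finset.sum_sub_distrib] at hkey
    rw [Finset.sum_add_distrib] at hkey
    linarith
  have hcardU : ((A \ B) ∪ (B \ A)).card ≤ 2 * k := by
    rw [Finset.card_union_of_disjoint disjoint_sdiff_sdiff]
    have h1 : (A \ B).card ≤ A.card := Finset.card_le_card (Finset.sdiff_subset)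
    have h2 : (B \ A).card ≤ B.card := Finset.card_le_card (Finset.sdiff_subset)
    rw [hA.1] at h1; rw [hB.1] at h2; omega
  have hEe : ∑ l ∈ (A \ B) ∪ (B \ A), e l ≤ ∑ l ∈ E, e l :=
    sum_le_topSet e (fun l => abs_nonneg _) (2 * k) E _ hE hcardU
  have hfinal : ∑ l ∈ A, y l - ∑ l ∈ B, y l ≤ ∑ l ∈ E, e l := le_trans hsplit hEe
  have hcast : ((2 * k : ℕ) : ℝ) = 2 * (k : ℝ) := by push_cast; ring
  rw [hcast]
  have : 2 * (1 / (2 * (k : ℝ)) * ∑ l ∈ E, e l) = (1 / (k : ℝ)) * ∑ l ∈ E, e l := by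
    field_simp
  rw [show (∑ l ∈ E, |yhat l - y l|) = ∑ l ∈ E, e l from rfl, this]
  have := mul_le_mul_of_nonneg_left hfinal (le_of_lt (one_div_pos.mpr hkR))
  linarith
end

section
/- The ranking regret at k is bounded by the maximum absolute error: WP-regret@k(ŷ, y) ≤ 2·max_{l=1,…,L} |y_l − ŷ_l|. -/
/-- `WP-regret@k(ŷ, y) ≤ 2·max_l |y_l − ŷ_l|`. -/
theorem wp_regret_le_two_max_error
    (L k : ℕ) (hk : 0 < k) (hkL : k ≤ L) (hL : 0 < L)
    (y yhat : Fin L → ℝ) (hy : ∀ l, 0 ≤ y l) (hyhat : ∀ l, 0 ≤ yhat l)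
    (A B : Finset (Fin L)) (hA : IsTopSet y k A) (hB : IsTopSet yhat k B) :
    (1 / (k : ℝ)) * (∑ l ∈ A, y l) - (1 / (k : ℝ)) * (∑ l ∈ B, y l) ≤
      2 * Finset.univ.sup' (Finset.univ_nonempty_iff.mpr ⟨⟨0, hL⟩⟩)
        (fun l => |y l - yhat l|) := by
  set ε := Finset.univ.sup' (Finset.univ_nonempty_iff.mpr ⟨⟨0, hL⟩⟩)
      (fun l => |y l - yhat l|) with hε
  have hεle : ∀ l, |y l - yhat l| ≤ ε := fun l => by
    rw [hε]; exact Finset.le_sup' (fun l => |y l - yhat l|) (Finset.mem_univ l)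
  have hε0 : 0 ≤ ε := le_trans (abs_nonneg _) (hεle ⟨0, hL⟩)
  have hcard : (A \ B).card = (B \ A).card := by
    have h1 := Finset.card_sdiff_add_card_inter A B
    have h2 := Finset.card_sdiff_add_card_inter B A
    rw [Finset.inter_comm] at h2
    have := hA.1; have := hB.1
    omega
  set n := (A \ B).card with hn
  -- key: sum of yhat over A\B ≤ sum over B\A
  have hyhatsum : ∑ l ∈ A \ B, yhat l ≤ ∑ l ∈ B \ A, yhat l := by
    rcases Nat.eq_zero_or_pos n with h0 | hpos
    · have hAB : A \ B = ∅ := Finset.card_eq_zero.mp h0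
      have hBA : B \ A = ∅ := Finset.card_eq_zero.mp (hcard ▸ h0)
      simp [hAB, hBA]
    · have hne : (B \ A).Nonempty := Finset.card_pos.mp (hcard ▸ hpos)
      have h1 : ∑ l ∈ A \ B, yhat l ≤ n • ((B \ A).inf' hne yhat) := by
        apply Finset.sum_le_card_nsmul
        intro x hx
        apply Finset.le_inf'
        intro m hm
        exact hB.2 m (Finset.mem_sdiff.mp hm).1 x (Finset.mem_sdiff.mp hx).2
      have h2 : (B \ A).card • ((B \ A).inf' hne yhat) ≤ ∑ l ∈ B \ A, yhat l := by
        apply Finset.card_nsmul_le_sum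
        intro x hx
        exact Finset.inf'_le _ hx
      calc ∑ l ∈ A \ B, yhat l ≤ n • ((B \ A).inf' hne yhat) := h1
        _ = (B \ A).card • ((B \ A).inf' hne yhat) := by rw [hcard]
        _ ≤ _ := h2
  have hdiff : ∑ l ∈ A, y l - ∑ l ∈ B, y l
      = ∑ l ∈ A \ B, y l - ∑ l ∈ B \ A, y l := by
    have h1 := Finset.sum_inter_add_sum_sdiff A B y
    have h2 := Finset.sum_inter_add_sum_sdiff B A y
    rw [Finset.inter_comm] at h2
    linarith
  have hup : ∑ l ∈ A \ B, y l ≤ ∑ l ∈ A \ B, (yhat l + ε) :=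
    Finset.sum_le_sum fun l _ => by
      have := abs_le.mp (hεle l); linarith [this.2]
  have hdown : ∑ l ∈ B \ A, (yhat l - ε) ≤ ∑ l ∈ B \ A, y l :=
    Finset.sum_le_sum fun l _ => by
      have := abs_le.mp (hεle l); linarith [this.1]
  have hsumconst : ∑ _l ∈ A \ B, ε = (n : ℝ) * ε := by
    simp [hn, mul_comm]
  have hsumconst' : ∑ _l ∈ B \ A, ε = (n : ℝ) * ε := by
    rw [Finset.sum_const, hcard.symm]; simp [mul_comm]
  have hmain : ∑ l ∈ A, y l - ∑ l ∈ B, y l ≤ 2 * (n : ℝ) * ε := by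
    rw [hdiff]
    have e1 : ∑ l ∈ A \ B, (yhat l + ε) = ∑ l ∈ A \ B, yhat l + (n : ℝ) * ε := by
      rw [Finset.sum_add_distrib, hsumconst]
    have e2 : ∑ l ∈ B \ A, (yhat l - ε) = ∑ l ∈ B \ A, yhat l - (n : ℝ) * ε := by
      rw [Finset.sum_sub_distrib, hsumconst']
    linarith
  have hnk : (n : ℝ) ≤ (k : ℝ) := by
    have : n ≤ k := hA.1 ▸ (Finset.card_le_card (Finset.sdiff_subset))
    exact_mod_cast this
  have hk' : (0 : ℝ) < k := by exact_mod_cast hk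
  rw [← mul_sub]
  have : 2 * (n : ℝ) * ε ≤ 2 * (k : ℝ) * ε := by nlinarith
  calc (1 / (k : ℝ)) * (∑ l ∈ A, y l - ∑ l ∈ B, y l)
      ≤ (1 / (k : ℝ)) * (2 * (k : ℝ) * ε) := by
        apply mul_le_mul_of_nonneg_left _ (by positivity)
        linarith
    _ = 2 * ε := by field_simp
end

section
/- For disjoint index sets A (the true top-k) and B (the predicted top-k), each of size k, with Σ_{l∈B} ŷ_l ≥ Σ_{l∈A} ŷ_l, the ranking regret satisfies (1/k)(Σ_{l∈A} y_l − Σ_{l∈B} y_l) ≤ (1/k)(Σ_{l∈A} e_l + Σ_{l∈B} e_l) where e_l = |y_l − ŷ_l|, and the right-hand side is at most 2·XMAD@2k(ŷ, y). -/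
lemma top_sum_le {L m : ℕ} (v : Fin L → ℝ) (hv : ∀ l, 0 ≤ v l)
    (E S : Finset (Fin L)) (hE : IsTopSet v m E) (hS : S.card ≤ m) :
    ∑ l ∈ S, v l ≤ ∑ l ∈ E, v l := by
  classical
  obtain ⟨hcard, htop⟩ := hE
  have hsub : (S \ E).card ≤ (E \ S).card := by
    have h1 := Finset.card_sdiff_add_card_inter S E
    have h2 := Finset.card_sdiff_add_card_inter E S
    rw [Finset.inter_comm] at h2
    omega
  obtain ⟨T, hTsub, hTcard⟩ := Finset.exists_subset_card_eq hsub
  have key : ∑ l ∈ S \ E, v l ≤ ∑ l ∈ T, v l := by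
    rcases Nat.eq_zero_or_pos (S \ E).card with h0 | hpos
    · rw [Finset.card_eq_zero.mp h0, Finset.sum_empty]
      exact Finset.sum_nonneg fun i _ => hv i
    · have hmul : ((S \ E).card : ℝ) * ∑ l ∈ S \ E, v l
          ≤ ((S \ E).card : ℝ) * ∑ l ∈ T, v l := by
        calc ((S \ E).card : ℝ) * ∑ l ∈ S \ E, v l
            = ∑ i ∈ T, ∑ l ∈ S \ E, v l := by
              rw [Finset.sum_const, hTcard, nsmul_eq_mul]
          _ ≤ ∑ i ∈ T, ∑ l ∈ S \ E, v i := by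
              refine Finset.sum_le_sum fun i hi => Finset.sum_le_sum fun l hl => ?_
              exact htop i (Finset.mem_sdiff.mp (hTsub hi)).1 l (Finset.mem_sdiff.mp hl).2
          _ = ∑ i ∈ T, ((S \ E).card : ℝ) * v i := by
              simp [Finset.sum_const, nsmul_eq_mul]
          _ = ((S \ E).card : ℝ) * ∑ l ∈ T, v l := by rw [← Finset.mul_sum]
      exact le_of_mul_le_mul_left hmul (by exact_mod_cast hpos)
  have hT2 : ∑ l ∈ T, v l ≤ ∑ l ∈ E \ S, v l :=
    Finset.sum_le_sum_of_subset_of_nonneg hTsub fun i _ _ => hv i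
  calc ∑ l ∈ S, v l = ∑ l ∈ S ∩ E, v l + ∑ l ∈ S \ E, v l :=
        (Finset.sum_inter_add_sum_sdiff S E v).symm
    _ ≤ ∑ l ∈ S ∩ E, v l + ∑ l ∈ E \ S, v l := by linarith
    _ = ∑ l ∈ E ∩ S, v l + ∑ l ∈ E \ S, v l := by rw [Finset.inter_comm]
    _ = ∑ l ∈ E, v l := Finset.sum_inter_add_sum_sdiff E S v

/-- for disjoint true top-`k` set `A` and predicted top-`k` set `B` with
`Σ_{B} ŷ ≥ Σ_{A} ŷ`, the regret is bounded by the average error over `A ∪ B`, which is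
at most `2·XMAD@2k`. -/
theorem regret_disjoint_bound
    (L k : ℕ) (hk : 0 < k) (hkL : 2 * k ≤ L)
    (y yhat : Fin L → ℝ) (hy : ∀ l, 0 ≤ y l) (hyhat : ∀ l, 0 ≤ yhat l)
    (A B E : Finset (Fin L))
    (hA : IsTopSet y k A) (hB : IsTopSet yhat k B)
    (hdisj : Disjoint A B)
    (hBA : ∑ l ∈ A, yhat l ≤ ∑ l ∈ B, yhat l)
    (hE : IsTopSet (fun l => |yhat l - y l|) (2 * k) E) :
    (1 / (k : ℝ)) * (∑ l ∈ A, y l - ∑ l ∈ B, y l) ≤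
        (1 / (k : ℝ)) * (∑ l ∈ A, |y l - yhat l| + ∑ l ∈ B, |y l - yhat l|) ∧
      (1 / (k : ℝ)) * (∑ l ∈ A, |y l - yhat l| + ∑ l ∈ B, |y l - yhat l|) ≤
        2 * ((1 / ((2 * k : ℕ) : ℝ)) * ∑ l ∈ E, |yhat l - y l|) := by
  have hkpos : (0:ℝ) < k := by exact_mod_cast hk
  have hinv : (0:ℝ) ≤ 1 / (k:ℝ) := by positivity
  constructor
  · apply mul_le_mul_of_nonneg_left _ hinv
    have hA1 : ∑ l ∈ A, (y l - yhat l) ≤ ∑ l ∈ A, |y l - yhat l| :=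
      Finset.sum_le_sum fun l _ => le_abs_self _
    have hB1 : ∑ l ∈ B, (yhat l - y l) ≤ ∑ l ∈ B, |y l - yhat l| :=
      Finset.sum_le_sum fun l _ => (abs_sub_comm (y l) (yhat l)) ▸ le_abs_self _
    rw [Finset.sum_sub_distrib] at hA1 hB1
    linarith
  · have hcardAB : (A ∪ B).card = 2 * k := by
      rw [Finset.card_union_of_disjoint hdisj, hA.1, hB.1]; ring
    have hsum : ∑ l ∈ A, |y l - yhat l| + ∑ l ∈ B, |y l - yhat l|
        = ∑ l ∈ A ∪ B, |yhat l - y l| := by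
      rw [Finset.sum_union hdisj]
      simp_rw [abs_sub_comm (y _) (yhat _)]
    have hle : ∑ l ∈ A ∪ B, |yhat l - y l| ≤ ∑ l ∈ E, |yhat l - y l| :=
      top_sum_le (fun l => |yhat l - y l|) (fun l => abs_nonneg _) E (A ∪ B) hE
        (le_of_eq hcardAB)
    rw [hsum]
    have h2 : 2 * ((1 / ((2 * k : ℕ) : ℝ)) * ∑ l ∈ E, |yhat l - y l|)
        = (1 / (k:ℝ)) * ∑ l ∈ E, |yhat l - y l| := by
      push_cast
      field_simp
    rw [h2]
    exact mul_le_mul_of_nonneg_left hle hinv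
end

section
/- Let y = ∏_{h=1}^{H} z_h and ŷ = ∏_{h=1}^{H} ẑ_h with all z_h, ẑ_h ∈ [0,1] and ẑ_h ∈ (0,1). Then the Bernoulli KL divergence satisfies D_KL(y ‖ ŷ) ≤ Σ_{h=1}^{H} s_h · D_KL(z_h ‖ ẑ_h), where s_h = ∏_{h̃=1}^{h−1} z_{h̃} (with s_1 = 1). -/
/-- KL divergence between Bernoulli distributions `Ber(p)` and `Ber(q)`,
with the convention `0·log 0 = 0` (realized by `Real.log 0 = 0`). -/
noncomputable def klBer (p q : ℝ) : ℝ :=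
  p * Real.log (p / q) + (1 - p) * Real.log ((1 - p) / (1 - q))

/-- Two-term log-sum inequality. -/
lemma logSum2 (a b a' b' : ℝ) (ha : 0 ≤ a) (hb : 0 ≤ b) (ha' : 0 < a') (hb' : 0 < b') :
    (a + b) * Real.log ((a + b) / (a' + b')) ≤
      a * Real.log (a / a') + b * Real.log (b / b') := by
  rcases eq_or_lt_of_le ha with rfl | ha0
  · simp only [zero_add, zero_mul, zero_div, Real.log_zero, mul_zero]
    rcases eq_or_lt_of_le hb with rfl | hb0
    · simp
    · have h1 : b / (a' + b') ≤ b / b' := by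
        exact div_le_div_of_nonneg_left hb hb' (by linarith)
      have h2 : (0:ℝ) < b / (a' + b') := by positivity
      have := Real.log_le_log h2 h1
      nlinarith [Real.log_le_log h2 h1]
  rcases eq_or_lt_of_le hb with rfl | hb0
  · simp only [add_zero, zero_mul, zero_div, Real.log_zero, mul_zero]
    have h1 : a / (a' + b') ≤ a / a' :=
      div_le_div_of_nonneg_left ha ha' (by linarith)
    have h2 : (0:ℝ) < a / (a' + b') := by positivity
    nlinarith [Real.log_le_log h2 h1]
  · -- both positive: tangent line trick
    set s := a + b with hs
    set s' := a' + b' with hs'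
    have hspos : 0 < s := by positivity
    have hs'pos : 0 < s' := by positivity
    have key1 : Real.log (a' * s / (a * s')) ≤ a' * s / (a * s') - 1 :=
      Real.log_le_sub_one_of_pos (by positivity)
    have key2 : Real.log (b' * s / (b * s')) ≤ b' * s / (b * s') - 1 :=
      Real.log_le_sub_one_of_pos (by positivity)
    have e1 : Real.log (a' * s / (a * s')) = Real.log (s / s') - Real.log (a / a') := by
      rw [Real.log_div (by positivity) (by positivity), Real.log_mul (by positivity) (by positivity),
        Real.log_mul (by positivity) (by positivity), Real.log_div (by positivity) (by positivity),
        Real.log_div (by positivity) (by positivity)]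
      ring
    have e2 : Real.log (b' * s / (b * s')) = Real.log (s / s') - Real.log (b / b') := by
      rw [Real.log_div (by positivity) (by positivity), Real.log_mul (by positivity) (by positivity),
        Real.log_mul (by positivity) (by positivity), Real.log_div (by positivity) (by positivity),
        Real.log_div (by positivity) (by positivity)]
      ring
    have h1 : a * Real.log (s / s') - a * Real.log (a / a') ≤ a' * s / s' - a := by
      have := mul_le_mul_of_nonneg_left key1 ha
      rw [e1] at this
      have : a * (Real.log (s / s') - Real.log (a / a')) ≤ a * (a' * s / (a * s') - 1) := this
      calc a * Real.log (s / s') - a * Real.log (a / a')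
          = a * (Real.log (s / s') - Real.log (a / a')) := by ring
        _ ≤ a * (a' * s / (a * s') - 1) := this
        _ = a' * s / s' - a := by field_simp
    have h2 : b * Real.log (s / s') - b * Real.log (b / b') ≤ b' * s / s' - b := by
      have := mul_le_mul_of_nonneg_left key2 hb
      rw [e2] at this
      have : b * (Real.log (s / s') - Real.log (b / b')) ≤ b * (b' * s / (b * s') - 1) := this
      calc b * Real.log (s / s') - b * Real.log (b / b')
          = b * (Real.log (s / s') - Real.log (b / b')) := by ring
        _ ≤ b * (b' * s / (b * s') - 1) := this
        _ = b' * s / s' - b := by field_simp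
    have hsum : a' * s / s' - a + (b' * s / s' - b) = 0 := by
      field_simp
      ring
    nlinarith [h1, h2]

/-- One-step chain bound. -/
lemma klBer_step (y z y' z' : ℝ) (hy : y ∈ Set.Icc (0:ℝ) 1) (hz : z ∈ Set.Icc (0:ℝ) 1)
    (hy' : y' ∈ Set.Ioo (0:ℝ) 1) (hz' : z' ∈ Set.Ioo (0:ℝ) 1) :
    klBer (y * z) (y' * z') ≤ klBer y y' + y * klBer z z' := by
  obtain ⟨hy0, hy1⟩ := hy
  obtain ⟨hz0, hz1⟩ := hz
  obtain ⟨hy'0, hy'1⟩ := hy'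
  obtain ⟨hz'0, hz'1⟩ := hz'
  have split1 : y * z * Real.log (y * z / (y' * z')) =
      y * z * Real.log (y / y') + y * z * Real.log (z / z') := by
    rcases eq_or_lt_of_le hy0 with rfl | hy0'
    · simp
    rcases eq_or_lt_of_le hz0 with rfl | hz0'
    · simp
    rw [show y * z / (y' * z') = (y / y') * (z / z') by field_simp,
      Real.log_mul (ne_of_gt (div_pos hy0' hy'0)) (ne_of_gt (div_pos hz0' hz'0))]
    ring
  have split2 : y * (1 - z) * Real.log (y / y') + y * (1 - z) * Real.log ((1 - z) / (1 - z')) =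
      y * (1 - z) * Real.log (y * (1 - z) / (y' * (1 - z'))) := by
    rcases eq_or_lt_of_le hy0 with rfl | hy0'
    · simp
    rcases eq_or_lt_of_le hz1 with hz1' | hz1'
    · rw [hz1']; simp
    rw [show y * (1 - z) / (y' * (1 - z')) = (y / y') * ((1 - z) / (1 - z')) by
        field_simp,
      Real.log_mul (ne_of_gt (div_pos hy0' hy'0))
        (ne_of_gt (div_pos (by linarith) (by linarith)))]
    ring
  have hls := logSum2 (y * (1 - z)) (1 - y) (y' * (1 - z')) (1 - y')
    (mul_nonneg hy0 (by linarith)) (by linarith) (mul_pos hy'0 (by linarith)) (by linarith)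
  have e3 : y * (1 - z) + (1 - y) = 1 - y * z := by ring
  have e4 : y' * (1 - z') + (1 - y') = 1 - y' * z' := by ring
  rw [e3, e4] at hls
  simp only [klBer]
  nlinarith [hls, split1, split2]

/-- ℕ-indexed induction version. -/
lemma klBer_chain_nat (f g : ℕ → ℝ) :
    ∀ n : ℕ, (∀ i < n + 1, f i ∈ Set.Icc (0:ℝ) 1) → (∀ i < n + 1, g i ∈ Set.Ioo (0:ℝ) 1) →
      klBer (∏ i ∈ Finset.range (n+1), f i) (∏ i ∈ Finset.range (n+1), g i) ≤
        ∑ i ∈ Finset.range (n+1), (∏ j ∈ Finset.range i, f j) * klBer (f i) (g i) := by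
  intro n
  induction n with
  | zero =>
    intro _ _
    simp
  | succ n ih =>
    intro hf hg
    have hf' : ∀ i < n + 1, f i ∈ Set.Icc (0:ℝ) 1 := fun i hi => hf i (by omega)
    have hg' : ∀ i < n + 1, g i ∈ Set.Ioo (0:ℝ) 1 := fun i hi => hg i (by omega)
    have ihh := ih hf' hg'
    rw [Finset.prod_range_succ f (n+1), Finset.prod_range_succ g (n+1), Finset.sum_range_succ]
    have hymem : (∏ i ∈ Finset.range (n+1), f i) ∈ Set.Icc (0:ℝ) 1 := by
      constructor
      · exact Finset.prod_nonneg fun i hi => (hf' i (Finset.mem_range.mp hi)).1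
      · exact Finset.prod_le_one (fun i hi => (hf' i (Finset.mem_range.mp hi)).1)
          (fun i hi => (hf' i (Finset.mem_range.mp hi)).2)
    have hy'mem : (∏ i ∈ Finset.range (n+1), g i) ∈ Set.Ioo (0:ℝ) 1 := by
      constructor
      · exact Finset.prod_pos fun i hi => (hg' i (Finset.mem_range.mp hi)).1
      · calc ∏ i ∈ Finset.range (n+1), g i
            = (∏ i ∈ Finset.range n, g i) * g n := Finset.prod_range_succ g n
          _ ≤ 1 * g n := by
              apply mul_le_mul_of_nonneg_right _ (hg' n (by omega)).1.le
              exact Finset.prod_le_one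
                (fun i hi => (hg' i (by have := Finset.mem_range.mp hi; omega)).1.le)
                (fun i hi => (hg' i (by have := Finset.mem_range.mp hi; omega)).2.le)
          _ < 1 := by rw [one_mul]; exact (hg' n (by omega)).2
    have hstep := klBer_step _ (f (n+1)) _ (g (n+1)) hymem
      (hf (n+1) (by omega)) hy'mem (hg (n+1) (by omega))
    have : (∏ i ∈ Finset.range (n+1), f i) * klBer (f (n+1)) (g (n+1)) ≤
        (∏ j ∈ Finset.range (n+1), f j) * klBer (f (n+1)) (g (n+1)) := le_refl _
    linarith [hstep, ihh]

/-- for `y = ∏_h z_h` and `ŷ = ∏_h ẑ_h`,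
`D_KL(y‖ŷ) ≤ Σ_h s_h · D_KL(z_h‖ẑ_h)` where `s_h = ∏_{h̃ < h} z_{h̃}`. -/
theorem klBer_path_chain_bound
    (H : ℕ) (z zhat : Fin H → ℝ)
    (hz : ∀ h, z h ∈ Set.Icc (0 : ℝ) 1)
    (hzhat : ∀ h, zhat h ∈ Set.Ioo (0 : ℝ) 1) :
    klBer (∏ h, z h) (∏ h, zhat h) ≤
      ∑ h : Fin H, (∏ ht ∈ Finset.univ.filter (fun ht => ht < h), z ht) *
        klBer (z h) (zhat h) := by
  cases H with
  | zero => simp [klBer]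
  | succ n =>
    set f : ℕ → ℝ := fun i => if h : i < n + 1 then z ⟨i, h⟩ else (1:ℝ)/2 with hfdef
    set g : ℕ → ℝ := fun i => if h : i < n + 1 then zhat ⟨i, h⟩ else (1:ℝ)/2 with hgdef
    have hfz : ∀ h : Fin (n+1), f h.1 = z h := by
      intro h; simp [hfdef, h.isLt, Nat.lt_succ_iff.mp h.isLt]
    have hgz : ∀ h : Fin (n+1), g h.1 = zhat h := by
      intro h; simp [hgdef, h.isLt, Nat.lt_succ_iff.mp h.isLt]
    have hprodf : ∏ h : Fin (n+1), z h = ∏ i ∈ Finset.range (n+1), f i := by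
      rw [← Fin.prod_univ_eq_prod_range]
      exact Finset.prod_congr rfl fun h _ => (hfz h).symm
    have hprodg : ∏ h : Fin (n+1), zhat h = ∏ i ∈ Finset.range (n+1), g i := by
      rw [← Fin.prod_univ_eq_prod_range]
      exact Finset.prod_congr rfl fun h _ => (hgz h).symm
    have hprefix : ∀ h : Fin (n+1),
        (∏ ht ∈ Finset.univ.filter (fun ht => ht < h), z ht) =
          ∏ j ∈ Finset.range h.1, f j := by
      intro h
      apply Finset.prod_nbij (fun i => i.1)
      · intro i hi
        simp only [Finset.mem_filter, Finset.mem_univ, true_and] at hi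
        exact Finset.mem_range.mpr hi
      · intro i _ j _ hij
        exact Fin.val_injective hij
      · intro j hj
        have hj' := Finset.mem_range.mp hj
        refine ⟨⟨j, by omega⟩, ?_, rfl⟩
        simp only [Finset.coe_filter, Finset.mem_univ, true_and, Set.mem_setOf_eq]
        exact hj'
      · intro i hi
        exact (hfz i).symm
    have hsum : (∑ h : Fin (n+1), (∏ ht ∈ Finset.univ.filter (fun ht => ht < h), z ht) *
        klBer (z h) (zhat h)) =
        ∑ i ∈ Finset.range (n+1), (∏ j ∈ Finset.range i, f j) * klBer (f i) (g i) := by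
      rw [← Fin.sum_univ_eq_sum_range]
      exact Finset.sum_congr rfl fun h _ => by rw [hprefix h, hfz, hgz]
    rw [hprodf, hprodg, hsum]
    apply klBer_chain_nat f g n
    · intro i hi
      have : f i = z ⟨i, hi⟩ := by simp [hfdef, hi, Nat.lt_succ_iff.mp hi]
      rw [this]; exact hz _
    · intro i hi
      have : g i = zhat ⟨i, hi⟩ := by simp [hgdef, hi, Nat.lt_succ_iff.mp hi]
      rw [this]; exact hzhat _
end
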